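/- Let V_std be an n×n symmetric positive definite matrix and G an n×m matrix. Define V_env = G(Gᵀ V_std⁻¹ G)† Gᵀ where † is the Moore-Penrose inverse. Then V_std − V_env is positive semidefinite. -/
import Mathlib


open Matrix

/-- `IsMoorePenrose A B` states that `B` is the Moore–Penrose pseudoinverse of `A`. -/
def IsMoorePenrose {m n : Type*} [Fintype m] [Fintype n]
    (A : Matrix m n ℝ) (B : Matrix n m ℝ) : Prop :=
  A * B * A = A ∧ B * A * B = B ∧ (A * B)ᵀ = A * B ∧ (B * A)ᵀ = B * A

/-- Uniqueness of the Moore–Penrose inverse. -/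
lemma isMoorePenrose_unique {m n : Type*} [Fintype m] [Fintype n]
    {A : Matrix m n ℝ} {B C : Matrix n m ℝ}
    (hB : IsMoorePenrose A B) (hC : IsMoorePenrose A C) : B = C := by
  obtain ⟨hB1, hB2, hB3, hB4⟩ := hB
  obtain ⟨hC1, hC2, hC3, hC4⟩ := hC
  have hAB : A * B = A * C := by
    calc A * B = (A * B)ᵀ := hB3.symm
    _ = Bᵀ * (A * C * A)ᵀ := by rw [hC1, Matrix.transpose_mul]
    _ = Bᵀ * Aᵀ * (A * C)ᵀ := by
        rw [Matrix.transpose_mul (A * C) A, Matrix.mul_assoc]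
    _ = (A * B)ᵀ * (A * C) := by rw [hC3, Matrix.transpose_mul]
    _ = A * B * (A * C) := by rw [hB3]
    _ = A * C := by rw [← Matrix.mul_assoc, hB1]
  have hBA : B * A = C * A := by
    calc B * A = (B * A)ᵀ := hB4.symm
    _ = (A * C * A)ᵀ * Bᵀ := by rw [hC1, Matrix.transpose_mul]
    _ = (C * A)ᵀ * (Aᵀ * Bᵀ) := by
        simp only [Matrix.transpose_mul, Matrix.mul_assoc]
    _ = C * A * (B * A)ᵀ := by rw [hC4, Matrix.transpose_mul]
    _ = C * A * (B * A) := by rw [hB4]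
    _ = C * A := by
        rw [Matrix.mul_assoc, ← Matrix.mul_assoc A B A, hB1]
  calc B = B * A * B := hB2.symm
  _ = C * A * B := by rw [hBA]
  _ = C * (A * C) := by rw [Matrix.mul_assoc, hAB]
  _ = C := by rw [← Matrix.mul_assoc, hC2]

/-- For V_std symmetric positive definite and any G,
V_std − G(Gᵀ V_std⁻¹ G)† Gᵀ is positive semidefinite. -/
theorem envelope_efficiency_gain {n m : ℕ}
    (Vstd : Matrix (Fin n) (Fin n) ℝ) (G : Matrix (Fin n) (Fin m) ℝ)
    (hV : Vstd.PosDef)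
    (D : Matrix (Fin m) (Fin m) ℝ) (hD : IsMoorePenrose (Gᵀ * Vstd⁻¹ * G) D) :
    (Vstd - G * D * Gᵀ).PosSemidef := by
  set M := Gᵀ * Vstd⁻¹ * G with hM
  have hVsymm : Vstdᵀ = Vstd := hV.isHermitian
  have hWsymm : (Vstd⁻¹)ᵀ = Vstd⁻¹ := by
    rw [Matrix.transpose_nonsing_inv, hVsymm]
  have hMsymm : Mᵀ = M := by
    simp only [hM, Matrix.transpose_mul, Matrix.transpose_transpose, hWsymm, Matrix.mul_assoc]
  -- D is symmetric, by uniqueness of the MP inverse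
  have hDsymm : Dᵀ = D := by
    refine isMoorePenrose_unique ?_ hD
    obtain ⟨h1, h2, h3, h4⟩ := hD
    refine ⟨?_, ?_, ?_, ?_⟩
    · calc M * Dᵀ * M = (Mᵀ * D * Mᵀ)ᵀ := by
            simp [Matrix.transpose_mul, Matrix.mul_assoc]
      _ = M := by rw [hMsymm, h1, hMsymm]
    · calc Dᵀ * M * Dᵀ = (D * Mᵀ * D)ᵀ := by
            simp [Matrix.transpose_mul, Matrix.mul_assoc]
      _ = Dᵀ := by rw [hMsymm, h2]
    · have e3 : M * Dᵀ = D * M := by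
        conv_lhs => rw [← hMsymm, ← Matrix.transpose_mul, h4]
      rw [e3]; exact h4
    · have e4 : Dᵀ * M = M * D := by
        conv_lhs => rw [← hMsymm, ← Matrix.transpose_mul, h3]
      rw [e4]; exact h3
  set S := G * D * Gᵀ with hS
  have hSsymm : Sᵀ = S := by
    simp only [hS, Matrix.transpose_mul, Matrix.transpose_transpose, hDsymm, Matrix.mul_assoc]
  have hdet : IsUnit Vstd.det := isUnit_iff_ne_zero.mpr hV.det_pos.ne'
  have hVV : Vstd * Vstd⁻¹ = 1 := Matrix.mul_nonsing_inv _ hdet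
  have hVV' : Vstd⁻¹ * Vstd = 1 := Matrix.nonsing_inv_mul _ hdet
  -- key: S * Vstd⁻¹ * S = S
  have hSWS : S * Vstd⁻¹ * S = S := by
    have : S * Vstd⁻¹ * S = G * (D * M * D) * Gᵀ := by
      simp only [hS, hM, Matrix.mul_assoc]
    rw [this, hD.2.1]
  have hkey : Vstd - S = (Vstd - S)ᵀ * Vstd⁻¹ * (Vstd - S) := by
    rw [show (Vstd - S)ᵀ = Vstd - S by rw [Matrix.transpose_sub, hVsymm, hSsymm]]
    have : (Vstd - S) * Vstd⁻¹ * (Vstd - S)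
        = Vstd * Vstd⁻¹ * Vstd - Vstd * Vstd⁻¹ * S - S * Vstd⁻¹ * Vstd + S * Vstd⁻¹ * S := by
      noncomm_ring
    rw [this, hSWS, hVV, Matrix.one_mul, Matrix.one_mul,
      Matrix.mul_assoc S _ _, hVV', Matrix.mul_one]
    abel
  rw [hkey]
  have hWps : (Vstd⁻¹).PosSemidef := hV.inv.posSemidef
  have := hWps.conjTranspose_mul_mul_same (Vstd - S)
  simpa using this
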